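/- arXiv:2212.07477 — 5 statements merged into one kernel-verified Lean document; each statement's English description precedes it below -/
import Mathlib

section
/- (Sufficiency of the kernel condition for the discretized Neumann boundary condition, Lemma 2.) Suppose the matrix K satisfies K(0,j) = −Σ_{k≠0} (c_k/c₀)·K(k,j) for all j ≠ 0, and K(0,0) = −Σ_{k≠0} (c_k/c₀)·K(k,0) + α_N/(c₀·u₀(0)). Then the vector u = K·u₀ satisfies Σ_{k=0}^{N−1} c_k·u(k) = α_N. -/
open Matrix Finset

/-- sufficiency of the kernel condition for the discretized Neumann
boundary condition, Lemma 2. -/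
theorem neumann_kernel_condition_sufficient {n : ℕ}
    (K : Matrix (Fin (n+2)) (Fin (n+2)) ℝ)
    (c : Fin (n+2) → ℝ) (hc : c 0 ≠ 0)
    (u₀ : Fin (n+2) → ℝ) (hu₀ : u₀ 0 ≠ 0) (αN : ℝ)
    (hrow : ∀ j, j ≠ 0 → K 0 j = -∑ k ∈ Finset.univ \ {0}, (c k / c 0) * K k j)
    (hcol : K 0 0 = -(∑ k ∈ Finset.univ \ {0}, (c k / c 0) * K k 0) + αN / (c 0 * u₀ 0)) :
    ∑ k, c k * (K.mulVec u₀) k = αN := by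
  classical
  set S := Finset.univ \ ({0} : Finset (Fin (n+2))) with hS
  have key : ∀ j, K 0 j = -∑ k ∈ S, (c k / c 0) * K k j
      + (if j = 0 then αN / (c 0 * u₀ 0) else 0) := by
    intro j
    by_cases h : j = 0
    · subst h; simpa using hcol
    · simp [h, hrow j h]
  have hsplit : ∀ v : Fin (n+2) → ℝ, ∑ k, v k = v 0 + ∑ k ∈ S, v k := by
    intro v
    rw [hS, ← Finset.sum_sdiff (Finset.subset_univ {0})]
    simp [add_comm]
  rw [hsplit]
  simp only [Matrix.mulVec, dotProduct]
  have pointwise : ∀ j, c 0 * (K 0 j * u₀ j)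
      = -∑ k ∈ S, c k * (K k j * u₀ j) + (if j = 0 then αN else 0) := by
    intro j
    rw [key j]
    by_cases h : j = 0
    · subst h
      rw [if_pos rfl, if_pos rfl, add_mul, mul_add]
      congr 1
      · simp only [neg_mul, mul_neg, Finset.sum_mul, Finset.mul_sum, neg_inj]
        refine Finset.sum_congr rfl fun k _ => ?_
        field_simp
      · field_simp
    · rw [if_neg h, if_neg h, add_zero, add_zero]
      simp only [neg_mul, mul_neg, Finset.sum_mul, Finset.mul_sum, neg_inj]
      refine Finset.sum_congr rfl fun k _ => ?_
      field_simp
  have h0 : c 0 * ∑ j, K 0 j * u₀ j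
      = -∑ k ∈ S, c k * ∑ j, K k j * u₀ j + αN := by
    rw [Finset.mul_sum, Finset.sum_congr rfl (fun j _ => pointwise j),
      Finset.sum_add_distrib]
    congr 1
    · simp only [Finset.sum_neg_distrib, neg_inj]
      rw [Finset.sum_comm]
      exact Finset.sum_congr rfl fun k _ => (Finset.mul_sum ..).symm
    · simp
  rw [h0]
  ring
end

section
/- (Neumann kernel correction, Lemma 3.) Let u₀ ∈ ℝᴺ with u₀(0) ≠ 0, let α_N ∈ ℝ, set β = α_N/(c₀·u₀(0)), and let K_bdy = T¹_N(β) · K · T²_D. Then the vector u = K_bdy·u₀ satisfies the discretized Neumann boundary condition Σ_{k=0}^{N−1} c_k·u(k) = α_N. -/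
open Matrix Finset

/-- The matrix `T¹_N(β)`: row 0 is `(β/K₀₀, −c₁/c₀, …, −c_{N−1}/c₀)`,
and row `i` is the `i`-th standard basis row for `i ≠ 0`. -/
noncomputable def T1N {n : ℕ} (K : Matrix (Fin (n+2)) (Fin (n+2)) ℝ)
    (c : Fin (n+2) → ℝ) (β : ℝ) : Matrix (Fin (n+2)) (Fin (n+2)) ℝ :=
  Matrix.of fun i j =>
    if i = 0 then (if j = 0 then β / K 0 0 else -c j / c 0) else if i = j then 1 else 0

/-- The matrix `T²_D`: entry (0,0) is 1, entries (0,j) are `−K(0,j)/K₀₀` for `j ≠ 0`,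
diagonal entries 1 for rows `i ≠ 0`, all other entries 0. -/
noncomputable def T2D {n : ℕ} (K : Matrix (Fin (n+2)) (Fin (n+2)) ℝ) :
    Matrix (Fin (n+2)) (Fin (n+2)) ℝ :=
  Matrix.of fun i j =>
    if i = 0 then (if j = 0 then 1 else -K 0 j / K 0 0) else if i = j then 1 else 0

/-- Neumann kernel correction, Lemma 3. -/
theorem neumann_kernel_correction {n : ℕ} (K : Matrix (Fin (n+2)) (Fin (n+2)) ℝ)
    (hK : K 0 0 ≠ 0) (c : Fin (n+2) → ℝ) (hc : c 0 ≠ 0)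
    (u₀ : Fin (n+2) → ℝ) (hu₀ : u₀ 0 ≠ 0) (αN : ℝ)
    (β : ℝ) (hβ : β = αN / (c 0 * u₀ 0))
    (Kbdy : Matrix (Fin (n+2)) (Fin (n+2)) ℝ)
    (hKbdy : Kbdy = T1N K c β * K * T2D K) :
    ∑ k, c k * (Kbdy.mulVec u₀) k = αN := by
  subst hKbdy
  rw [Matrix.mul_assoc, ← Matrix.mulVec_mulVec]
  set w : Fin (n+2) → ℝ := (K * T2D K).mulVec u₀ with hwdef
  have hwsucc : ∀ i : Fin (n+1), (T2D K).mulVec u₀ i.succ = u₀ i.succ := by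
    intro i
    simp [Matrix.mulVec, dotProduct, T2D, Fin.succ_ne_zero i, eq_comm,
      Finset.sum_ite_eq, ite_mul]
  have hw0 : w 0 = K 0 0 * u₀ 0 := by
    rw [hwdef, ← Matrix.mulVec_mulVec]
    have h0 : (T2D K).mulVec u₀ 0 = u₀ 0 + ∑ i : Fin (n+1), -K 0 i.succ / K 0 0 * u₀ i.succ := by
      simp [Matrix.mulVec, dotProduct, T2D, Fin.sum_univ_succ, Fin.succ_ne_zero]
    have hexp : (K *ᵥ ((T2D K) *ᵥ u₀)) 0 = ∑ j, K 0 j * ((T2D K) *ᵥ u₀) j := rfl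
    rw [hexp, Fin.sum_univ_succ, h0]
    simp only [hwsucc]
    have : ∀ i : Fin (n+1), K 0 0 * (-K 0 i.succ / K 0 0 * u₀ i.succ)
        = -(K 0 i.succ * u₀ i.succ) := by
      intro i; field_simp
    rw [mul_add, Finset.mul_sum]
    simp only [this]
    rw [Finset.sum_neg_distrib]
    ring
  have hT1 : (T1N K c β).mulVec w 0
      = β / K 0 0 * w 0 + ∑ i : Fin (n+1), -c i.succ / c 0 * w i.succ := by
    simp [Matrix.mulVec, dotProduct, T1N, Fin.sum_univ_succ, Fin.succ_ne_zero]
  have hT1s : ∀ i : Fin (n+1), (T1N K c β).mulVec w i.succ = w i.succ := by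
    intro i
    simp [Matrix.mulVec, dotProduct, T1N, Fin.succ_ne_zero i, eq_comm,
      Finset.sum_ite_eq, ite_mul]
  rw [Fin.sum_univ_succ]
  rw [hT1]
  simp only [hT1s, hw0]
  have hcan : ∀ i : Fin (n+1), c 0 * (-c i.succ / c 0 * w i.succ) = -(c i.succ * w i.succ) := by
    intro i; field_simp
  rw [mul_add, Finset.mul_sum]
  simp only [hcan]
  rw [Finset.sum_neg_distrib]
  have : c 0 * (β / K 0 0 * (K 0 0 * u₀ 0)) = αN := by
    rw [hβ]; field_simp
  rw [this]; ring
end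

section
/- (Correctness of the Neumann correction algorithm, part of Theorem 2.) Let u₀ ∈ ℝᴺ with u₀(0) ≠ 0, let α_N ∈ ℝ, and set β = α_N/(c₀·u₀(0)). Define ỹ ∈ ℝᴺ by ỹ(0) = 2·u₀(0) − (K·u₀)(0)/K₀₀ and ỹ(j) = u₀(j) for j ≠ 0, and define u ∈ ℝᴺ by u(0) = α_N/c₀ − Σ_{k≠0} (c_k/c₀)·(K·ỹ)(k) and u(i) = (K·ỹ)(i) for i ≠ 0. Then u = (T¹_N(β) · K · T²_D)·u₀; that is, the algorithm output using only matrix–vector products with K equals the boundary-corrected operator applied to u₀. -/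
open Matrix Finset

/-- correctness of the Neumann correction algorithm, Theorem 2. -/
theorem neumann_algorithm_correct {n : ℕ} (K : Matrix (Fin (n+2)) (Fin (n+2)) ℝ)
    (hK : K 0 0 ≠ 0) (c : Fin (n+2) → ℝ) (hc : c 0 ≠ 0)
    (u₀ : Fin (n+2) → ℝ) (hu₀ : u₀ 0 ≠ 0) (αN : ℝ)
    (β : ℝ) (hβ : β = αN / (c 0 * u₀ 0))
    (ytil : Fin (n+2) → ℝ)
    (hy0 : ytil 0 = 2 * u₀ 0 - (K.mulVec u₀) 0 / K 0 0)
    (hyj : ∀ j, j ≠ 0 → ytil j = u₀ j)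
    (u : Fin (n+2) → ℝ)
    (hu0 : u 0 = αN / c 0 - ∑ k ∈ Finset.univ \ {0}, (c k / c 0) * (K.mulVec ytil) k)
    (hui : ∀ i, i ≠ 0 → u i = (K.mulVec ytil) i) :
    u = (T1N K c β * K * T2D K).mulVec u₀ := by
  set s : Finset (Fin (n+2)) := Finset.univ \ {0} with hs
  have hsplit : ∀ (f : Fin (n+2) → ℝ), ∑ j, f j = f 0 + ∑ j ∈ s, f j := by
    intro f
    rw [Finset.sum_eq_sum_sdiff_singleton_add (Finset.mem_univ 0) f]
    ring
  have hmem : ∀ j : Fin (n+2), j ∈ s → j ≠ 0 := by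
    intro j hj
    simpa using (Finset.mem_sdiff.mp hj).2
  have hpull : ∀ (a : ℝ) (g : Fin (n+2) → ℝ),
      ∑ j ∈ s, a * g j = a * ∑ j ∈ s, g j := fun a g => (Finset.mul_sum _ _ _).symm
  have hKu : (K.mulVec u₀) 0 = K 0 0 * u₀ 0 + ∑ j ∈ s, K 0 j * u₀ j := by
    rw [Matrix.mulVec, dotProduct, hsplit]
  have hrow : ∀ (M : Matrix (Fin (n+2)) (Fin (n+2)) ℝ) (v : Fin (n+2) → ℝ) (i : Fin (n+2)),
      (∀ j, j ≠ i → M i j = 0) → M i i = 1 → M.mulVec v i = v i := by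
    intro M v i h0 h1
    rw [Matrix.mulVec, dotProduct,
      Finset.sum_eq_single i (fun b _ hb => by rw [h0 b hb, zero_mul])
        (fun h => absurd (Finset.mem_univ i) h), h1, one_mul]
  -- T2D u₀ = ytil
  have hty : (T2D K).mulVec u₀ = ytil := by
    funext i
    rcases eq_or_ne i 0 with rfl | hi
    · rw [Matrix.mulVec, dotProduct, hsplit]
      have e0 : T2D K 0 0 * u₀ 0 = u₀ 0 := by simp [T2D]
      have e1 : ∀ j ∈ s, T2D K 0 j * u₀ j = (-(1 / K 0 0)) * (K 0 j * u₀ j) := by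
        intro j hj
        have : T2D K 0 j = -K 0 j / K 0 0 := by simp [T2D, hmem j hj]
        rw [this]; ring
      rw [e0, Finset.sum_congr rfl e1, hpull, hy0, hKu]
      field_simp
      ring
    · exact (hrow _ _ i (fun j hj => by simp [T2D, hi, Ne.symm hj])
        (by simp [T2D, hi])).trans (hyj i hi).symm
  have hkey : (K.mulVec ytil) 0 = K 0 0 * u₀ 0 := by
    rw [Matrix.mulVec, dotProduct, hsplit,
      Finset.sum_congr rfl (fun j hj => by rw [hyj j (hmem j hj)]), hy0, hKu]
    field_simp
    ring
  rw [show (T1N K c β * K * T2D K).mulVec u₀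
      = (T1N K c β).mulVec (K.mulVec ((T2D K).mulVec u₀)) by
    rw [← Matrix.mulVec_mulVec, ← Matrix.mulVec_mulVec], hty]
  funext i
  rcases eq_or_ne i 0 with rfl | hi
  · rw [hu0, Matrix.mulVec, dotProduct, hsplit]
    have e0 : T1N K c β 0 0 = β / K 0 0 := by simp [T1N]
    have e1 : ∀ j ∈ s, T1N K c β 0 j * (K.mulVec ytil) j
        = (-(1 / c 0)) * (c j * (K.mulVec ytil) j) := by
      intro j hj
      have : T1N K c β 0 j = -c j / c 0 := by simp [T1N, hmem j hj]
      rw [this]; ring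
    have e2 : ∀ k ∈ s, (c k / c 0) * (K.mulVec ytil) k
        = (1 / c 0) * (c k * (K.mulVec ytil) k) := by
      intro k _; ring
    rw [Finset.sum_congr rfl e1, hpull, e0, hkey,
      Finset.sum_congr rfl e2, hpull]
    have h1 : β / K 0 0 * (K 0 0 * u₀ 0) = αN / c 0 := by
      rw [hβ]; field_simp
    rw [h1]
    ring
  · rw [hui i hi]
    exact (hrow _ _ i (fun j hj => by simp [T1N, hi, Ne.symm hj])
      (by simp [T1N, hi])).symm
end

section
/- (Boundedness of the Neumann correction, discrete lemma.) Let u₀ ∈ ℝᴺ with u₀(0) ≠ 0, let α_N ∈ ℝ, set β = α_N/(c₀·u₀(0)), and let K_bdy = T¹_N(β) · K · T²_D. Then, with u = K·u₀ and ũ = K_bdy·u₀, the squared Euclidean norm of the difference satisfies ‖u − ũ‖₂² = f₁² + f₂², where f₁ = u(0) − α_N/c₀ + (1/c₀)·Σ_{k≠0} c_k·u(k) + Σ_{k≠0} (c_k·K(k,0))/(c₀·K₀₀) · (K₀₀·u₀(0) − u(0)) and f₂² = (u(0) − K₀₀·u₀(0))² · (Σ_{i=0}^{N−1} K(i,0)²/K₀₀²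 − 1). In particular ‖u − ũ‖₂ ≤ √(f₁² + f₂²). -/
open Matrix Finset

/-- boundedness of the Neumann correction, discrete lemma. -/
theorem neumann_correction_bounded {n : ℕ} (K : Matrix (Fin (n+2)) (Fin (n+2)) ℝ)
    (hK : K 0 0 ≠ 0) (c : Fin (n+2) → ℝ) (hc : c 0 ≠ 0)
    (u₀ : Fin (n+2) → ℝ) (hu₀ : u₀ 0 ≠ 0) (αN : ℝ)
    (β : ℝ) (hβ : β = αN / (c 0 * u₀ 0))
    (Kbdy : Matrix (Fin (n+2)) (Fin (n+2)) ℝ)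
    (hKbdy : Kbdy = T1N K c β * K * T2D K)
    (u utilde : Fin (n+2) → ℝ)
    (hu : u = K.mulVec u₀) (hut : utilde = Kbdy.mulVec u₀)
    (f₁ f₂sq : ℝ)
    (hf₁ : f₁ = u 0 - αN / c 0 + (1 / c 0) * (∑ k ∈ Finset.univ \ {0}, c k * u k) +
      ∑ k ∈ Finset.univ \ {0},
        (c k * K k 0) / (c 0 * K 0 0) * (K 0 0 * u₀ 0 - u 0))
    (hf₂ : f₂sq = (u 0 - K 0 0 * u₀ 0) ^ 2 * ((∑ i, K i 0 ^ 2 / K 0 0 ^ 2) - 1)) :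
    ∑ i, (u i - utilde i) ^ 2 = f₁ ^ 2 + f₂sq ∧
    Real.sqrt (∑ i, (u i - utilde i) ^ 2) ≤ Real.sqrt (f₁ ^ 2 + f₂sq) := by
  rw [← Finset.erase_eq] at hf₁
  have hu' : ∀ i, u i = ∑ j, K i j * u₀ j := by
    intro i; rw [hu]; rfl
  have hsplit : ∀ i, u i = K i 0 * u₀ 0 + ∑ j ∈ Finset.univ.erase 0, K i j * u₀ j := by
    intro i
    rw [hu' i, ← Finset.add_sum_erase _ _ (Finset.mem_univ 0)]
  set D := u 0 - K 0 0 * u₀ 0 with hD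
  set v := (T2D K).mulVec u₀ with hv
  set w := K.mulVec v with hw
  have hutw : utilde = (T1N K c β).mulVec w := by
    rw [hut, hKbdy, hw, hv, ← Matrix.mulVec_mulVec, ← Matrix.mulVec_mulVec]
  have hvj : ∀ j, v j = if j = 0 then u₀ 0 - D / K 0 0 else u₀ j := by
    intro j
    by_cases hj : j = 0
    · subst hj
      rw [if_pos rfl, hv, Matrix.mulVec, dotProduct,
        ← Finset.add_sum_erase _ _ (Finset.mem_univ 0)]
      have h1 : ∑ x ∈ Finset.univ.erase (0 : Fin (n+2)), T2D K 0 x * u₀ x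
          = -(1 / K 0 0) * ∑ x ∈ Finset.univ.erase (0 : Fin (n+2)), K 0 x * u₀ x := by
        rw [Finset.mul_sum]
        refine Finset.sum_congr rfl fun x hx => ?_
        have hx0 : x ≠ 0 := Finset.ne_of_mem_erase hx
        simp only [T2D, Matrix.of_apply, if_pos rfl, if_neg hx0, if_true]
        ring
      have h2 : ∑ x ∈ Finset.univ.erase (0 : Fin (n+2)), K 0 x * u₀ x = D := by
        have := hsplit 0
        rw [hD]; linarith
      rw [h1, h2]
      simp only [T2D, Matrix.of_apply, if_pos rfl, if_true]
      norm_num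
      ring
    · rw [if_neg hj, hv, Matrix.mulVec, dotProduct, Finset.sum_eq_single j]
      · simp [T2D, hj]
      · intro b _ hb
        have : ¬ (j = b) := fun h => hb h.symm
        simp [T2D, hj, this]
      · intro h; exact absurd (Finset.mem_univ j) h
  have hwi : ∀ i, w i = u i - K i 0 / K 0 0 * D := by
    intro i
    rw [hw, Matrix.mulVec, dotProduct, ← Finset.add_sum_erase _ _ (Finset.mem_univ 0)]
    have h1 : ∑ x ∈ Finset.univ.erase (0 : Fin (n+2)), K i x * v x
        = ∑ x ∈ Finset.univ.erase (0 : Fin (n+2)), K i x * u₀ x := by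
      refine Finset.sum_congr rfl fun x hx => ?_
      rw [hvj x, if_neg (Finset.ne_of_mem_erase hx)]
    have h2 : ∑ x ∈ Finset.univ.erase (0 : Fin (n+2)), K i x * u₀ x
        = u i - K i 0 * u₀ 0 := by
      have := hsplit i; linarith
    rw [h1, h2, hvj 0, if_pos rfl]
    field_simp
    ring
  have hw0 : w 0 = K 0 0 * u₀ 0 := by
    rw [hwi 0, hD]
    field_simp
    ring
  have hti : ∀ i : Fin (n+2), i ≠ 0 → utilde i = w i := by
    intro i hi
    rw [hutw, Matrix.mulVec, dotProduct, Finset.sum_eq_single i]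
    · simp [T1N, hi]
    · intro b _ hb
      have : ¬ (i = b) := fun h => hb h.symm
      simp [T1N, hi, this]
    · intro h; exact absurd (Finset.mem_univ i) h
  have ht0 : utilde 0 = αN / c 0
      - (1 / c 0) * ∑ j ∈ Finset.univ.erase (0 : Fin (n+2)), c j * w j := by
    rw [hutw, Matrix.mulVec, dotProduct, ← Finset.add_sum_erase _ _ (Finset.mem_univ 0)]
    have h1 : ∑ x ∈ Finset.univ.erase (0 : Fin (n+2)), T1N K c β 0 x * w x
        = -(1 / c 0) * ∑ x ∈ Finset.univ.erase (0 : Fin (n+2)), c x * w x := by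
      rw [Finset.mul_sum]
      refine Finset.sum_congr rfl fun x hx => ?_
      have hx0 : x ≠ 0 := Finset.ne_of_mem_erase hx
      simp only [T1N, Matrix.of_apply, if_pos rfl, if_neg hx0, if_true]
      ring
    rw [h1, hw0]
    simp only [T1N, Matrix.of_apply, if_pos rfl, if_true]
    rw [hβ]
    field_simp
    ring
  have hdiff0 : u 0 - utilde 0 = f₁ := by
    have hsw : ∑ j ∈ Finset.univ.erase (0 : Fin (n+2)), c j * w j
        = (∑ j ∈ Finset.univ.erase (0 : Fin (n+2)), c j * u j)
          - (∑ j ∈ Finset.univ.erase (0 : Fin (n+2)), c j * K j 0 / K 0 0) * D := by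
      rw [Finset.sum_mul, ← Finset.sum_sub_distrib]
      refine Finset.sum_congr rfl fun j hj => ?_
      rw [hwi j]; ring
    have hlast : ∑ k ∈ Finset.univ.erase (0 : Fin (n+2)),
        (c k * K k 0) / (c 0 * K 0 0) * (K 0 0 * u₀ 0 - u 0)
        = (∑ j ∈ Finset.univ.erase (0 : Fin (n+2)), c j * K j 0 / K 0 0)
          * ((K 0 0 * u₀ 0 - u 0) / c 0) := by
      rw [Finset.sum_mul]
      refine Finset.sum_congr rfl fun k _ => ?_
      ring
    rw [hf₁, ht0, hsw, hlast, hD]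
    field_simp
    ring
  have hmain : ∑ i, (u i - utilde i) ^ 2 = f₁ ^ 2 + f₂sq := by
    rw [← Finset.add_sum_erase _ _ (Finset.mem_univ 0), hdiff0]
    have e1 : ∑ i ∈ Finset.univ.erase (0 : Fin (n+2)), (u i - utilde i) ^ 2
        = (∑ i ∈ Finset.univ.erase (0 : Fin (n+2)), K i 0 ^ 2 / K 0 0 ^ 2) * D ^ 2 := by
      rw [Finset.sum_mul]
      refine Finset.sum_congr rfl fun i hi => ?_
      rw [hti i (Finset.ne_of_mem_erase hi), hwi i]
      field_simp
      ring
    have e2 : ∑ i ∈ Finset.univ.erase (0 : Fin (n+2)), K i 0 ^ 2 / K 0 0 ^ 2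
        = (∑ i, K i 0 ^ 2 / K 0 0 ^ 2) - 1 := by
      have h2 : K 0 0 ^ 2 / K 0 0 ^ 2
          + ∑ i ∈ Finset.univ.erase (0 : Fin (n+2)), K i 0 ^ 2 / K 0 0 ^ 2
          = ∑ i, K i 0 ^ 2 / K 0 0 ^ 2 :=
        Finset.add_sum_erase Finset.univ
          (fun i : Fin (n+2) => K i 0 ^ 2 / K 0 0 ^ 2) (Finset.mem_univ 0)
      have h00 : K 0 0 ^ 2 / K 0 0 ^ 2 = 1 := by field_simp
      linarith
    rw [e1, e2, hf₂, hD]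
    ring
  exact ⟨hmain, by rw [hmain]⟩
end

section
/- (Theorem 1, existence of the Neumann refinement.) Given a vector of finite-difference coefficients c ∈ ℝᴺ with c₀ := c(0) ≠ 0, a real number α_N, and a real number a₀ ≠ 0, there exist real N×N matrices A and B, each of which agrees with the identity matrix in every row except possibly row 0, such that the corrected matrix K_bdy = A·K·B satisfies the discretized Neumann boundary condition exactly: for every u₀ ∈ ℝᴺ with u₀(0) = a₀, Σ_{k=0}^{N−1} c_k·((A·K·B)·u₀)(k) = α_N. -/
open Matrix Finset

lemma neumann_swap {N : ℕ} (v : Fin N → ℝ) (f : Fin N → Fin N → ℝ) :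
    ∑ i, v i * ∑ j, f i j = ∑ j, ∑ i, v i * f i j := by
  simp_rw [Finset.mul_sum]
  exact Finset.sum_comm

lemma neumann_step {N : ℕ} (M B : Matrix (Fin N) (Fin N) ℝ) (v : Fin N → ℝ) (k : Fin N) :
    ∑ i, v i * (M * B) i k = ∑ j, (∑ i, v i * M i j) * B j k := by
  simp_rw [Matrix.mul_apply]
  rw [neumann_swap v (fun i j => M i j * B j k)]
  refine Finset.sum_congr rfl fun j _ => ?_
  rw [Finset.sum_mul]
  exact Finset.sum_congr rfl fun i _ => by ring

lemma neumann_vec {N : ℕ} (M : Matrix (Fin N) (Fin N) ℝ) (v u : Fin N → ℝ) :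
    ∑ k, v k * M.mulVec u k = ∑ m, (∑ k, v k * M k m) * u m := by
  simp_rw [Matrix.mulVec, dotProduct]
  rw [neumann_swap v (fun k m => M k m * u m)]
  refine Finset.sum_congr rfl fun m _ => ?_
  rw [Finset.sum_mul]
  exact Finset.sum_congr rfl fun k _ => by ring

/-- Theorem 1, existence of the Neumann refinement. -/
theorem exists_neumann_refinement {n : ℕ} (K : Matrix (Fin (n+2)) (Fin (n+2)) ℝ)
    (hK : K 0 0 ≠ 0) (c : Fin (n+2) → ℝ) (hc : c 0 ≠ 0) (αN : ℝ)
    (a₀ : ℝ) (ha₀ : a₀ ≠ 0) :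
    ∃ A B : Matrix (Fin (n+2)) (Fin (n+2)) ℝ,
      (∀ i, i ≠ 0 → ∀ j, A i j = if i = j then 1 else 0) ∧
      (∀ i, i ≠ 0 → ∀ j, B i j = if i = j then 1 else 0) ∧
      (∀ u₀ : Fin (n+2) → ℝ, u₀ 0 = a₀ →
        ∑ k, c k * ((A * K * B).mulVec u₀) k = αN) := by
  set t : ℝ := αN / (K 0 0 * a₀) with ht
  set A : Matrix (Fin (n+2)) (Fin (n+2)) ℝ :=
    fun i j => if i = 0 then (if j = 0 then t / c 0 else - c j / c 0)
      else (if i = j then 1 else 0) with hA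
  set B : Matrix (Fin (n+2)) (Fin (n+2)) ℝ :=
    fun i j => if i = 0 then (if j = 0 then 1 else - K 0 j / K 0 0)
      else (if i = j then 1 else 0) with hB
  refine ⟨A, B, fun i hi j => by simp [hA, hi], fun i hi j => by simp [hB, hi], ?_⟩
  intro u hu
  have h1 : ∀ j, (∑ i, c i * A i j) = if j = 0 then t else 0 := by
    intro j
    rw [Fintype.sum_eq_add_sum_compl 0]
    have : ∑ i ∈ ({0}ᶜ : Finset (Fin (n+2))), c i * A i j
        = if j ∈ ({0}ᶜ : Finset (Fin (n+2))) then c j * 1 else 0 := by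
      rw [← Finset.sum_ite_eq' ({0}ᶜ : Finset (Fin (n+2))) j (fun i => c i * 1)]
      refine Finset.sum_congr rfl fun i hi => ?_
      have hi0 : i ≠ 0 := by simpa using hi
      by_cases hij : i = j
      · subst hij; simp [hA, hi0]
      · simp [hA, hi0, hij]
    rw [this]
    by_cases hj : j = 0
    · simp [hA, hj, hc]; field_simp
    · simp [hA, hj, hc]; field_simp; ring
  have h3 : ∀ k, (∑ j, (t * K 0 j) * B j k) = if k = 0 then t * K 0 0 else 0 := by
    intro k
    rw [Fintype.sum_eq_add_sum_compl 0]
    have : ∑ j ∈ ({0}ᶜ : Finset (Fin (n+2))), (t * K 0 j) * B j k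
        = if k ∈ ({0}ᶜ : Finset (Fin (n+2))) then (t * K 0 k) * 1 else 0 := by
      rw [← Finset.sum_ite_eq' ({0}ᶜ : Finset (Fin (n+2))) k (fun j => (t * K 0 j) * 1)]
      refine Finset.sum_congr rfl fun j hj => ?_
      have hj0 : j ≠ 0 := by simpa using hj
      by_cases hjk : j = k
      · subst hjk; simp [hB, hj0]
      · simp [hB, hj0, hjk]
    rw [this]
    by_cases hk : k = 0
    · simp [hB, hk]
    · have : t * K 0 0 * (- K 0 k / K 0 0) = - (t * K 0 k) := by field_simp
      simp [hB, hk, this]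
  have key : ∀ k, (∑ i, c i * (A * K * B) i k) = if k = 0 then t * K 0 0 else 0 := by
    intro k
    rw [neumann_step (A * K) B c k]
    calc ∑ j, (∑ i, c i * (A * K) i j) * B j k
        = ∑ j, (t * K 0 j) * B j k := by
          refine Finset.sum_congr rfl fun j _ => ?_
          congr 1
          rw [neumann_step A K c j]
          rw [Fintype.sum_eq_add_sum_compl 0]
          have : ∑ l ∈ ({0}ᶜ : Finset (Fin (n+2))), (∑ i, c i * A i l) * K l j = 0 := by
            refine Finset.sum_eq_zero fun l hl => ?_
            have hl0 : l ≠ 0 := by simpa using hl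
            rw [h1]
            simp [hl0]
          rw [this, h1]
          simp
      _ = if k = 0 then t * K 0 0 else 0 := h3 k
  rw [neumann_vec (A * K * B) c u]
  calc ∑ m, (∑ k, c k * (A * K * B) k m) * u m
      = ∑ m, (if m = 0 then t * K 0 0 else 0) * u m := by
        refine Finset.sum_congr rfl fun m _ => ?_
        rw [key]
    _ = t * K 0 0 * u 0 := by
        rw [Finset.sum_eq_single 0] <;> simp +contextual
    _ = αN := by
        rw [hu, ht]
        field_simp
end
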